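/- Suppose the closed-loop system ẋᵢ = x_{i+1} (i = 1,…,n-1), ẋₙ = v(t, x + η(t)) + d(t) on [0,T), with n ≥ 2, has an absolute deadline at T (with η ≡ 0). Then for every δ > 0, the controller v is unbounded on the set {(t,x) : t ∈ [0,T), ‖x‖_∞ ≤ δ}; i.e., sup_{‖x‖_∞ ≤ δ, t ∈ [0,T)} |v(t,x)| = ∞. -/

import Mathlib

open Set Filter

/-- A solution, on `[s,T)`, of the closed-loop integrator chain
    ẋᵢ = x_{i+1} (i < n), ẋₙ = v(t, x + η(t)) + d(t). -/
def ChainSol (n : ℕ) (hn : 0 < n) (T : ℝ)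
    (v : ℝ → EuclideanSpace ℝ (Fin n) → ℝ) (d : ℝ → ℝ)
    (η : ℝ → EuclideanSpace ℝ (Fin n)) (s : ℝ)
    (x : ℝ → EuclideanSpace ℝ (Fin n)) : Prop :=
  ∀ t ∈ Set.Ico s T,
    (∀ i : Fin n, ∀ h : (i : ℕ) + 1 < n,
      HasDerivAt (fun τ => x τ i) (x t ⟨(i : ℕ) + 1, h⟩) t) ∧
    HasDerivAt (fun τ => x τ ⟨n - 1, Nat.sub_lt hn one_pos⟩)
      (v t (x t + η t) + d t) t

/-- Absolute deadline at `T` (with η ≡ 0). -/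
def ChainAbsDeadline (n : ℕ) (hn : 0 < n) (T : ℝ)
    (v : ℝ → EuclideanSpace ℝ (Fin n) → ℝ) (d : ℝ → ℝ) : Prop :=
  ∀ s ∈ Set.Ico (0:ℝ) T, ∀ x : ℝ → EuclideanSpace ℝ (Fin n),
    ChainSol n hn T v d (fun _ => 0) s x →
    Filter.Tendsto x (nhdsWithin T (Set.Iio T)) (nhds 0)

/-!
Suppose `|v| ≤ M` on `[0,T) × {‖x‖_∞ ≤ δ}`. Close to the deadline, a solution that stays in this
box from time `a` on and reaches `0` at `T` is already small at time `a`: each `xᵢ` with `i < n`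
moves at speed at most `δ`, and `xₙ` differs from the last coordinate of the solution `x⁰`
started at the origin (which is small near `T`) by at most `2M (T - a)`, because the unknown
disturbance `d` cancels in the difference. Going backwards from `T`, a solution started at
`(0,…,0,δ/2)` shortly before `T` therefore never reaches the boundary of the box, so it stays in
the box throughout, and then its last coordinate is at most `δ/4` at the start instead of `δ/2`.
-/

open Topology

theorem norm_le_mul_sub_of_hasDerivAt_of_tendsto_nhdsLT {E : Type*} [NormedAddCommGroup E]
    [NormedSpace ℝ E] {f f' : ℝ → E} {a T C : ℝ} (haT : a < T)
    (hf : ∀ t ∈ Ico a T, HasDerivAt f (f' t) t) (hf' : ∀ t ∈ Ico a T, ‖f' t‖ ≤ C)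
    (hlim : Tendsto f (𝓝[<] T) (𝓝 0)) : ‖f a‖ ≤ C * (T - a) := by
  have hmvt : ∀ b ∈ Ioo a T, ‖f b - f a‖ ≤ C * (b - a) := fun b hb =>
    norm_image_sub_le_of_norm_deriv_le_segment'
      (fun t ht => (hf t ⟨ht.1, ht.2.trans_lt hb.2⟩).hasDerivWithinAt)
      (fun t ht => hf' t ⟨ht.1, ht.2.trans hb.2⟩) b (right_mem_Icc.2 hb.1.le)
  have hrhs : Tendsto (fun b => C * (b - a)) (𝓝[<] T) (𝓝 (C * (T - a))) :=
    ((continuous_const.mul (continuous_id.sub continuous_const)).tendsto T).mono_left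
      nhdsWithin_le_nhds
  simpa using le_of_tendsto_of_tendsto (hlim.sub_const (f a)).norm hrhs
    (eventually_of_mem (Ioo_mem_nhdsLT haT) hmvt)

theorem exists_mem_Ico_forall_of_eventually_nhdsLT {p : ℝ → Prop} {a T : ℝ} (haT : a < T)
    (hp : ∀ᶠ t in 𝓝[<] T, p t) : ∃ s ∈ Ico a T, ∀ t ∈ Ico s T, p t := by
  obtain ⟨l, hlT, hl⟩ := mem_nhdsLT_iff_exists_Ico_subset.1 (inter_mem (Ioo_mem_nhdsLT haT) hp)
  exact ⟨l, ⟨(hl ⟨le_rfl, hlT⟩).1.1.le, hlT⟩, fun t ht => (hl ht).2⟩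

/-- Continuous induction backwards from `T`. -/
theorem ContinuousOn.mapsTo_Ico_of_eventually_nhdsLT {α : Type*} [TopologicalSpace α]
    {f : ℝ → α} {K U : Set α} {s T : ℝ} (hf : ContinuousOn f (Ico s T)) (hK : IsClosed K)
    (hU : IsOpen U) (hUK : U ⊆ K) (htail : ∀ᶠ t in 𝓝[<] T, f t ∈ K)
    (hstep : ∀ a ∈ Ico s T, MapsTo f (Ico a T) K → f a ∈ U) : MapsTo f (Ico s T) K := by
  obtain ⟨l, hlT, hl⟩ := mem_nhdsLT_iff_exists_Ico_subset.1 htail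
  set S := Icc s l ∩ f ⁻¹' Uᶜ
  have hSbdd : BddAbove S := bddAbove_Icc.mono inter_subset_left
  have hmem : ∀ t ∈ Ico s T, sSup S < t → f t ∈ K := fun t ht hut => by
    rcases le_or_gt t l with htl | hlt
    · by_contra hfK
      exact (le_csSup hSbdd ⟨⟨ht.1, htl⟩, fun hfU => hfK (hUK hfU)⟩).not_gt hut
    · exact hl ⟨hlt.le, ht.2⟩
  rcases S.eq_empty_or_nonempty with hS | hS
  · intro t ht
    rcases le_or_gt t l with htl | hlt
    · exact hUK (by_contra fun hfU => hS.subset ⟨⟨ht.1, htl⟩, hfU⟩)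
    · exact hl ⟨hlt.le, ht.2⟩
  have hSclosed : IsClosed S :=
    (hf.mono (Icc_subset_Ico_right hlT)).preimage_isClosed_of_isClosed isClosed_Icc
      hU.isClosed_compl
  obtain ⟨⟨hsu, hul⟩, hfu⟩ := hSclosed.csSup_mem hS hSbdd
  have huT : sSup S < T := hul.trans_lt hlT
  have hright : Ico s T ∈ 𝓝[>] sSup S :=
    mem_of_superset (Ioo_mem_nhdsGT huT) fun t ht => ⟨hsu.trans ht.1.le, ht.2⟩
  have hfuK : f (sSup S) ∈ K :=
    hK.mem_of_tendsto ((hf _ ⟨hsu, huT⟩).mono_of_mem_nhdsWithin hright)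
      (eventually_of_mem (inter_mem hright self_mem_nhdsWithin) fun t ht => hmem t ht.1 ht.2)
  refine absurd (hstep _ ⟨hsu, huT⟩ fun t ht => ?_) hfu
  rcases ht.1.eq_or_lt with h | h
  · exact h ▸ hfuK
  · exact hmem t ⟨hsu.trans ht.1, ht.2⟩ h

theorem EuclideanSpace.tendsto_apply_zero {ι α : Type*} {l : Filter α}
    {x : α → EuclideanSpace ℝ ι} (hx : Tendsto x l (𝓝 0)) (i : ι) :
    Tendsto (fun t => x t i) l (𝓝 0) :=
  (((continuous_apply i).comp (PiLp.continuous_ofLp 2 _)).tendsto 0).comp hx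

theorem EuclideanSpace.eventually_abs_apply_le {ι α : Type*} [Finite ι] {l : Filter α}
    {x : α → EuclideanSpace ℝ ι} (hx : Tendsto x l (𝓝 0)) {r : ℝ} (hr : 0 < r) :
    ∀ᶠ t in l, ∀ i, |x t i| ≤ r :=
  eventually_all.2 fun i => by
    simpa using
      (EuclideanSpace.tendsto_apply_zero hx i).abs.eventually (eventually_le_nhds (by simpa))

theorem EuclideanSpace.isClosed_setOf_forall_abs_apply_le {ι : Type*} [Finite ι] {r : ℝ} :
    IsClosed {z : EuclideanSpace ℝ ι | ∀ i, |z i| ≤ r} := by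
  simp only [ofPred_forall]
  exact isClosed_iInter fun i => isClosed_le (by fun_prop) continuous_const

theorem EuclideanSpace.isOpen_setOf_forall_abs_apply_lt {ι : Type*} [Finite ι] {r : ℝ} :
    IsOpen {z : EuclideanSpace ℝ ι | ∀ i, |z i| < r} := by
  simp only [ofPred_forall]
  exact isOpen_iInter_of_finite fun i => isOpen_lt (by fun_prop) continuous_const

namespace ChainSol

variable {n : ℕ} {hn : 0 < n} {T s : ℝ} {v : ℝ → EuclideanSpace ℝ (Fin n) → ℝ} {d : ℝ → ℝ}
  {η : ℝ → EuclideanSpace ℝ (Fin n)} {x y : ℝ → EuclideanSpace ℝ (Fin n)}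

theorem mono {s' : ℝ} (hx : ChainSol n hn T v d η s x) (hss' : s ≤ s') :
    ChainSol n hn T v d η s' x :=
  fun t ht => hx t ⟨hss'.trans ht.1, ht.2⟩

theorem continuousOn (hx : ChainSol n hn T v d η s x) : ContinuousOn x (Ico s T) := by
  refine (PiLp.continuous_toLp 2 _).comp_continuousOn (continuousOn_pi.2 fun j t ht => ?_)
  refine ContinuousAt.continuousWithinAt ?_
  by_cases hj : (j : ℕ) + 1 < n
  · exact ((hx t ht).1 j hj).continuousAt
  · obtain rfl : j = ⟨n - 1, Nat.sub_lt hn one_pos⟩ := Fin.ext (by simp only; omega)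
    exact (hx t ht).2.continuousAt

theorem abs_apply_le_mul_sub (hx : ChainSol n hn T v d η s x)
    (hlim : Tendsto x (𝓝[<] T) (𝓝 0)) {a δ : ℝ} (ha : a ∈ Ico s T)
    (hbox : ∀ t ∈ Ico a T, ∀ j, |x t j| ≤ δ) (i : Fin n) (hi : (i : ℕ) + 1 < n) :
    |x a i| ≤ δ * (T - a) := by
  simpa using norm_le_mul_sub_of_hasDerivAt_of_tendsto_nhdsLT ha.2
    (fun t ht => (hx t ⟨ha.1.trans ht.1, ht.2⟩).1 i hi)
    (fun t ht => by simpa using hbox t ht _) (EuclideanSpace.tendsto_apply_zero hlim i)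

theorem abs_last_sub_le (hx : ChainSol n hn T v d η s x) (hy : ChainSol n hn T v d η s y)
    (hxlim : Tendsto x (𝓝[<] T) (𝓝 0)) (hylim : Tendsto y (𝓝[<] T) (𝓝 0)) {a M : ℝ}
    (ha : a ∈ Ico s T) (hvx : ∀ t ∈ Ico a T, |v t (x t + η t)| ≤ M)
    (hvy : ∀ t ∈ Ico a T, |v t (y t + η t)| ≤ M) :
    |x a ⟨n - 1, Nat.sub_lt hn one_pos⟩ - y a ⟨n - 1, Nat.sub_lt hn one_pos⟩| ≤
      2 * M * (T - a) := by
  set last : Fin n := ⟨n - 1, Nat.sub_lt hn one_pos⟩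
  have hderiv : ∀ t ∈ Ico a T, HasDerivAt (fun τ => (x τ last : ℝ) - y τ last)
      (v t (x t + η t) - v t (y t + η t)) t := fun t ht => by
    have ht' : t ∈ Ico s T := ⟨ha.1.trans ht.1, ht.2⟩
    have hxd : HasDerivAt (fun τ => (x τ last : ℝ)) _ t := (hx t ht').2
    have hyd : HasDerivAt (fun τ => (y τ last : ℝ)) _ t := (hy t ht').2
    exact (hxd.sub hyd).congr_deriv (add_sub_add_right_eq_sub _ _ _)
  have hbound : ∀ t ∈ Ico a T, ‖v t (x t + η t) - v t (y t + η t)‖ ≤ 2 * M := fun t ht =>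
    (norm_sub_le _ _).trans (by simpa [two_mul] using add_le_add (hvx t ht) (hvy t ht))
  have hlim : Tendsto (fun τ => (x τ last : ℝ) - y τ last) (𝓝[<] T) (𝓝 0) := by
    simpa using (EuclideanSpace.tendsto_apply_zero hxlim last).sub
      (EuclideanSpace.tendsto_apply_zero hylim last)
  simpa using norm_le_mul_sub_of_hasDerivAt_of_tendsto_nhdsLT ha.2 hderiv hbound hlim

theorem abs_apply_le_of_abs_control_le {x₀ : ℝ → EuclideanSpace ℝ (Fin n)} {δ M : ℝ}
    (hy : ChainSol n hn T v d (fun _ => 0) s y) (hylim : Tendsto y (𝓝[<] T) (𝓝 0))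
    (hv : ∀ t ∈ Ico s T, ∀ z : EuclideanSpace ℝ (Fin n), (∀ i, |z i| ≤ δ) → |v t z| ≤ M)
    (hx₀ : ChainSol n hn T v d (fun _ => 0) s x₀) (hx₀lim : Tendsto x₀ (𝓝[<] T) (𝓝 0))
    (hx₀small : ∀ t ∈ Ico s T, ∀ i, |x₀ t i| ≤ δ / 8)
    (hTs : T - s ≤ 1 / 4) (hMs : 2 * M * (T - s) ≤ δ / 8) :
    ∀ a ∈ Ico s T, (∀ t ∈ Ico a T, ∀ i, |y t i| ≤ δ) → ∀ i, |y a i| ≤ δ / 4 := by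
  intro a ha hbox i
  have hδ : 0 ≤ δ := (abs_nonneg _).trans (hbox a ⟨le_rfl, ha.2⟩ i)
  have hM : 0 ≤ M := (abs_nonneg _).trans (hv a ha _ (hbox a ⟨le_rfl, ha.2⟩))
  have hTa : T - a ≤ T - s := by linarith [ha.1]
  by_cases hi : (i : ℕ) + 1 < n
  · calc |y a i| ≤ δ * (T - a) := hy.abs_apply_le_mul_sub hylim ha hbox i hi
      _ ≤ δ * (1 / 4) := by gcongr; linarith
      _ = δ / 4 := by ring
  · obtain rfl : i = ⟨n - 1, Nat.sub_lt hn one_pos⟩ := Fin.ext (by simp only; omega)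
    have hdiff := hy.abs_last_sub_le hx₀ hylim hx₀lim ha
      (fun t ht => by simpa using hv t ⟨ha.1.trans ht.1, ht.2⟩ _ (hbox t ht))
      (fun t ht => by
        have ht' : t ∈ Ico s T := ⟨ha.1.trans ht.1, ht.2⟩
        simpa using hv t ht' _ fun j => (hx₀small t ht' j).trans (by linarith))
    linarith [hx₀small a ha ⟨n - 1, Nat.sub_lt hn one_pos⟩, abs_sub_abs_le_abs_sub
      (y a ⟨n - 1, Nat.sub_lt hn one_pos⟩) (x₀ a ⟨n - 1, Nat.sub_lt hn one_pos⟩),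
      mul_le_mul_of_nonneg_left hTa (by linarith : 0 ≤ 2 * M)]

end ChainSol

/-- Theorem 1(iii): under an absolute deadline at `T`, for every
    δ > 0 the controller v is unbounded on {(t,x) : t ∈ [0,T), ‖x‖_∞ ≤ δ}. -/
theorem stmt6 (n : ℕ) (hn : 2 ≤ n) (T : ℝ) (hT : 0 < T)
    (v : ℝ → EuclideanSpace ℝ (Fin n) → ℝ) (d : ℝ → ℝ)
    (hex : ∀ s ∈ Set.Ico (0:ℝ) T, ∀ ξ : EuclideanSpace ℝ (Fin n),
      ∃ x : ℝ → EuclideanSpace ℝ (Fin n),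
        ChainSol n (by omega) T v d (fun _ => 0) s x ∧ x s = ξ)
    (habs : ChainAbsDeadline n (by omega) T v d) :
    ∀ δ > (0:ℝ), ∀ M : ℝ, ∃ t ∈ Set.Ico (0:ℝ) T,
      ∃ y : EuclideanSpace ℝ (Fin n), (∀ i, |y i| ≤ δ) ∧ M < |v t y| := by
  intro δ hδ M
  by_contra! hv
  have hgap : Tendsto (fun t => T - t) (𝓝[<] T) (𝓝 0) := by
    simpa using ((continuous_sub_left T).tendsto T).mono_left nhdsWithin_le_nhds
  have hMgap : Tendsto (fun t => 2 * M * (T - t)) (𝓝[<] T) (𝓝 0) := by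
    simpa using hgap.const_mul (2 * M)
  obtain ⟨s₀, hs₀, hs₀near⟩ := exists_mem_Ico_forall_of_eventually_nhdsLT hT
    ((hgap.eventually (eventually_le_nhds (by norm_num : (0 : ℝ) < 1 / 4))).and
      (hMgap.eventually (eventually_le_nhds (by positivity : 0 < δ / 8))))
  obtain ⟨x₀, hx₀, -⟩ := hex s₀ hs₀ 0
  have hx₀lim := habs s₀ hs₀ x₀ hx₀
  obtain ⟨s, hs, hx₀small⟩ := exists_mem_Ico_forall_of_eventually_nhdsLT hs₀.2
    (EuclideanSpace.eventually_abs_apply_le hx₀lim (by positivity : 0 < δ / 8))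
  have hs0 : s ∈ Ico 0 T := ⟨hs₀.1.trans hs.1, hs.2⟩
  obtain ⟨y, hy, hys⟩ := hex s hs0 (EuclideanSpace.single ⟨n - 1, by omega⟩ (δ / 2))
  have hylim := habs s hs0 y hy
  have hquarter := hy.abs_apply_le_of_abs_control_le hylim
    (fun t ht => hv t ⟨hs0.1.trans ht.1, ht.2⟩) (hx₀.mono hs.1) hx₀lim hx₀small
    (hs₀near s hs).1 (hs₀near s hs).2
  have hybox : ∀ t ∈ Ico s T, ∀ i, |y t i| ≤ δ :=
    hy.continuousOn.mapsTo_Ico_of_eventually_nhdsLT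
      (K := {z : EuclideanSpace ℝ (Fin n) | ∀ i, |z i| ≤ δ}) (U := {z | ∀ i, |z i| < δ})
      EuclideanSpace.isClosed_setOf_forall_abs_apply_le
      EuclideanSpace.isOpen_setOf_forall_abs_apply_lt (fun z hz i => (hz i).le)
      (EuclideanSpace.eventually_abs_apply_le hylim hδ)
      fun a ha hbox i => (hquarter a ha hbox i).trans_lt (by linarith)
  have hlast := hquarter s ⟨le_rfl, hs.2⟩ hybox ⟨n - 1, by omega⟩
  simp only [hys, PiLp.single_apply, if_pos, abs_of_pos (half_pos hδ)] at hlast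
  linarith
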